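/- arXiv:2410.13345 — 7 statements merged into one kernel-verified Lean document; each statement's English description precedes it below -/
import Mathlib

section
/- Let K, w, h be real numbers with K > 0, 0 < h < w, set D₁ = (K−w)² − 4K(h−w) and N₁ = ((K−w) + √D₁)/2. Then h/(w+N₁)² < 1/K; equivalently, for every r > 0 the quantity λ₁ = rN₁(h/(w+N₁)² − 1/K) is negative. -/
/-- Under a weak Allee effect, at the axial equilibrium N₁ the first
Jacobian eigenvalue λ₁ = rN₁(h/(w+N₁)² − 1/K) is negative. -/
theorem weak_allee_first_eigenvalue_negative (K w h D₁ N₁ : ℝ)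
    (hK : 0 < K) (hh : 0 < h) (hhw : h < w)
    (hD : D₁ = (K - w) ^ 2 - 4 * K * (h - w))
    (hN₁ : N₁ = ((K - w) + Real.sqrt D₁) / 2) :
    h / (w + N₁) ^ 2 < 1 / K ∧
    ∀ r : ℝ, 0 < r → r * N₁ * (h / (w + N₁) ^ 2 - 1 / K) < 0 := by
  have hw : 0 < w := hh.trans hhw
  have hD0 : 0 < D₁ := by rw [hD]; nlinarith [sq_nonneg (K - w)]
  set s := Real.sqrt D₁ with hsdef
  have hs : 0 < s := Real.sqrt_pos.mpr hD0
  have hs2 : s ^ 2 = D₁ := Real.sq_sqrt hD0.le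
  have hN₁pos : 0 < N₁ := by
    rw [hN₁]
    nlinarith [hs, hs2, hD, mul_pos hK (sub_pos.mpr hhw)]
  have hwN : 0 < w + N₁ := by linarith
  have key : K * h < (w + N₁) ^ 2 := by
    have h1 : w + N₁ = (K + w + s) / 2 := by rw [hN₁]; ring
    rw [h1]
    nlinarith [mul_pos (by linarith : (0:ℝ) < K + w) hs, hs2, hD]
  have h1 : h / (w + N₁) ^ 2 < 1 / K := by
    rw [div_lt_div_iff₀ (by positivity) hK]
    linarith
  refine ⟨h1, fun r hr => ?_⟩
  have : h / (w + N₁) ^ 2 - 1 / K < 0 := by linarith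
  exact mul_neg_of_pos_of_neg (mul_pos hr hN₁pos) this
end

section
/- Let r, K, a, b, c, δ, h, w be positive real numbers with h < w (weak Allee effect), set D₁ = (K−w)² − 4K(h−w), N₁ = ((K−w) + √D₁)/2, and suppose cN₁ < δ(b + N₁²). Then every complex eigenvalue of the Jacobian matrix J₁ = !![rN₁(h/(w+N₁)² − 1/K), −aN₁/(b+N₁²); 0, (cN₁ − δ(b+N₁²))/(b+N₁²)] has negative real part. -/
/-- Weak Allee effect with cN₁ < δ(b + N₁²): every complex eigenvalue of the
Jacobian at the axial equilibrium E₁ = (N₁, 0) has negative real part, so E₁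
is locally asymptotically stable. -/
theorem axial_equilibrium_stable_weak_allee (r K a b c δ h w D₁ N₁ : ℝ)
    (hr : 0 < r) (hK : 0 < K) (ha : 0 < a) (hb : 0 < b) (hc : 0 < c)
    (hδ : 0 < δ) (hh : 0 < h) (hw : 0 < w) (hhw : h < w)
    (hD : D₁ = (K - w) ^ 2 - 4 * K * (h - w))
    (hN₁ : N₁ = ((K - w) + Real.sqrt D₁) / 2)
    (hstab : c * N₁ < δ * (b + N₁ ^ 2))
    (J₁ : Matrix (Fin 2) (Fin 2) ℝ)
    (hJ : J₁ = !![r * N₁ * (h / (w + N₁) ^ 2 - 1 / K), -(a * N₁) / (b + N₁ ^ 2);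
      0, (c * N₁ - δ * (b + N₁ ^ 2)) / (b + N₁ ^ 2)]) :
    ∀ μ ∈ spectrum ℂ (J₁.map (Complex.ofReal)), μ.re < 0 := by
  have hD1pos : 0 < D₁ := by nlinarith [sq_nonneg (K - w)]
  have hsq : Real.sqrt D₁ ^ 2 = D₁ := Real.sq_sqrt hD1pos.le
  have hsqpos : 0 < Real.sqrt D₁ := Real.sqrt_pos.mpr hD1pos
  have hN1pos : 0 < N₁ := by
    rw [hN₁]
    nlinarith [hsq, mul_pos hK (sub_pos.mpr hhw), sq_nonneg (Real.sqrt D₁ + (K - w))]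
  have hwN : 0 < w + N₁ := by linarith
  have hquad : N₁ ^ 2 - (K - w) * N₁ + K * (h - w) = 0 := by
    rw [hN₁]; ring_nf; nlinarith [hsq]
  -- first diagonal entry negative
  have hkey : h * K < (w + N₁) ^ 2 := by
    nlinarith [mul_pos hwN hsqpos, hquad, hN₁]
  have hx : r * N₁ * (h / (w + N₁) ^ 2 - 1 / K) < 0 := by
    have h1 : h / (w + N₁) ^ 2 - 1 / K < 0 := by
      rw [sub_neg, div_lt_div_iff₀ (by positivity) hK]
      nlinarith
    exact mul_neg_of_pos_of_neg (by positivity) h1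
  have hz : (c * N₁ - δ * (b + N₁ ^ 2)) / (b + N₁ ^ 2) < 0 :=
    div_neg_of_neg_of_pos (by linarith) (by positivity)
  intro μ hμ
  subst hJ
  rw [spectrum.mem_iff] at hμ
  have hdet : ((algebraMap ℂ (Matrix (Fin 2) (Fin 2) ℂ)) μ -
      (!![r * N₁ * (h / (w + N₁) ^ 2 - 1 / K), -(a * N₁) / (b + N₁ ^ 2);
      0, (c * N₁ - δ * (b + N₁ ^ 2)) / (b + N₁ ^ 2)]).map Complex.ofReal).det = 0 := by
    by_contra hne
    exact hμ ((Matrix.isUnit_iff_isUnit_det _).mpr (isUnit_iff_ne_zero.mpr hne))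
  simp [Matrix.det_fin_two, Matrix.algebraMap_matrix_apply, Matrix.map_apply] at hdet
  rcases hdet with h0 | h0
  · have : μ = ((r * N₁ * (h / (w + N₁) ^ 2 - 1 / K) : ℝ) : ℂ) := by
      push_cast; linear_combination h0
    rw [this, Complex.ofReal_re]; exact hx
  · have : μ = (((c * N₁ - δ * (b + N₁ ^ 2)) / (b + N₁ ^ 2) : ℝ) : ℂ) := by
      push_cast; linear_combination h0
    rw [this, Complex.ofReal_re]; exact hz
end

section
/- Let r, K, a, b, c, δ, h, w be positive real numbers with h < w (weak Allee effect), set D₁ = (K−w)² − 4K(h−w), N₁ = ((K−w) + √D₁)/2, and suppose cN₁ > δ(b + N₁²). Then the Jacobian matrix J₁ = !![rN₁(h/(w+N₁)² − 1/K), −aN₁/(b+N₁²); 0, (cN₁ − δ(b+N₁²))/(b+N₁²)] has one complex eigenvalue with negative real part and one complex eigenvalue with positive real part; in particular the axial equilibrium E₁ is a saddle. -/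
lemma tri_spec (α β γ : ℂ) :
    α ∈ spectrum ℂ !![α, β; 0, γ] ∧ γ ∈ spectrum ℂ !![α, β; 0, γ] := by
  constructor <;>
  · rw [spectrum.mem_iff]
    intro hu
    rw [Matrix.isUnit_iff_isUnit_det] at hu
    simp [Matrix.det_fin_two, Matrix.algebraMap_matrix_apply] at hu

/-- Weak Allee effect with cN₁ > δ(b + N₁²): the Jacobian at the axial
equilibrium E₁ = (N₁, 0) has one complex eigenvalue with negative real part
and one with positive real part, so E₁ is a saddle. -/
theorem axial_equilibrium_saddle_weak_allee (r K a b c δ h w D₁ N₁ : ℝ)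
    (hr : 0 < r) (hK : 0 < K) (ha : 0 < a) (hb : 0 < b) (hc : 0 < c)
    (hδ : 0 < δ) (hh : 0 < h) (hw : 0 < w) (hhw : h < w)
    (hD : D₁ = (K - w) ^ 2 - 4 * K * (h - w))
    (hN₁ : N₁ = ((K - w) + Real.sqrt D₁) / 2)
    (hunstab : c * N₁ > δ * (b + N₁ ^ 2))
    (J₁ : Matrix (Fin 2) (Fin 2) ℝ)
    (hJ : J₁ = !![r * N₁ * (h / (w + N₁) ^ 2 - 1 / K), -(a * N₁) / (b + N₁ ^ 2);
      0, (c * N₁ - δ * (b + N₁ ^ 2)) / (b + N₁ ^ 2)]) :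
    (∃ μ ∈ spectrum ℂ (J₁.map (Complex.ofReal)), μ.re < 0) ∧
    (∃ ν ∈ spectrum ℂ (J₁.map (Complex.ofReal)), 0 < ν.re) := by
  set α : ℝ := r * N₁ * (h / (w + N₁) ^ 2 - 1 / K) with hα
  set β : ℝ := -(a * N₁) / (b + N₁ ^ 2) with hβ
  set γ : ℝ := (c * N₁ - δ * (b + N₁ ^ 2)) / (b + N₁ ^ 2) with hγ
  have hbN : (0:ℝ) < b + N₁ ^ 2 := by positivity
  have hN₁pos : 0 < N₁ := by nlinarith
  have hsq : Real.sqrt D₁ ≥ 0 := Real.sqrt_nonneg _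
  have hwN : w + N₁ = (K + w + Real.sqrt D₁) / 2 := by rw [hN₁]; ring
  have hKh : h * K < (w + N₁) ^ 2 := by
    rw [hwN]; nlinarith [sq_nonneg (K - w), sq_nonneg (Real.sqrt D₁)]
  have hwNpos : (0:ℝ) < w + N₁ := by linarith
  have hαneg : α < 0 := by
    have : h / (w + N₁) ^ 2 < 1 / K := by
      rw [div_lt_div_iff₀ (by positivity) hK]; linarith
    have hrN : 0 < r * N₁ := by positivity
    nlinarith
  have hγpos : 0 < γ := div_pos (by linarith) hbN
  have hmap : J₁.map Complex.ofReal = !![(α:ℂ), (β:ℂ); 0, (γ:ℂ)] := by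
    subst hJ
    ext i j
    fin_cases i <;> fin_cases j <;> simp [hα, hβ, hγ]
  rw [hmap]
  obtain ⟨h1, h2⟩ := tri_spec (α:ℂ) (β:ℂ) (γ:ℂ)
  exact ⟨⟨α, h1, by simpa using hαneg⟩, ⟨γ, h2, by simpa using hγpos⟩⟩
end

section
/- Let K, w, h be real numbers with 0 < w < K and h = (K+w)²/(4K), and set N₃ = (K−w)/2. Then h/(w+N₃)² = 1/K, so for every r > 0 the eigenvalue λ₁ = rN₃(h/(w+N₃)² − 1/K) equals 0; consequently 0 is an eigenvalue of the Jacobian matrix J₃ = !![rN₃(h/(w+N₃)² − 1/K), −aN₃/(b+N₃²); 0, (cN₃ − δ(b+N₃²))/(b+N₃²)] for all positive a, b, c, δ, i.e. the axial equilibrium E₃ = (N₃, 0) is non-hyperbolic. -/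
/-- When h = (K+w)²/(4K) and N₃ = (K−w)/2, we have h/(w+N₃)² = 1/K, so
λ₁ = rN₃(h/(w+N₃)² − 1/K) = 0 for all r > 0, and 0 is an eigenvalue of the
Jacobian at the axial equilibrium E₃ = (N₃, 0) for all positive parameters:
E₃ is non-hyperbolic. -/
theorem axial_equilibrium_nonhyperbolic (K w h N₃ : ℝ)
    (hw : 0 < w) (hwK : w < K) (hh : h = (K + w) ^ 2 / (4 * K))
    (hN₃ : N₃ = (K - w) / 2) :
    h / (w + N₃) ^ 2 = 1 / K ∧
    (∀ r : ℝ, 0 < r → r * N₃ * (h / (w + N₃) ^ 2 - 1 / K) = 0) ∧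
    ∀ r a b c δ : ℝ, 0 < r → 0 < a → 0 < b → 0 < c → 0 < δ →
      (0 : ℂ) ∈ spectrum ℂ
        ((!![r * N₃ * (h / (w + N₃) ^ 2 - 1 / K), -(a * N₃) / (b + N₃ ^ 2);
          0, (c * N₃ - δ * (b + N₃ ^ 2)) / (b + N₃ ^ 2)] :
          Matrix (Fin 2) (Fin 2) ℝ).map (Complex.ofReal)) := by
  have hK : (0:ℝ) < K := hw.trans hwK
  have hwN : w + N₃ = (K + w) / 2 := by rw [hN₃]; ring
  have hKw : K + w ≠ 0 := by positivity
  have h1 : h / (w + N₃) ^ 2 = 1 / K := by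
    rw [hh, hwN]
    field_simp
    ring
  refine ⟨h1, fun r _ => by rw [h1]; ring, ?_⟩
  intro r a b c δ hr ha hb hc hδ
  rw [spectrum.zero_mem_iff, Matrix.isUnit_iff_isUnit_det]
  have hdet : ((!![r * N₃ * (h / (w + N₃) ^ 2 - 1 / K), -(a * N₃) / (b + N₃ ^ 2);
      0, (c * N₃ - δ * (b + N₃ ^ 2)) / (b + N₃ ^ 2)] :
      Matrix (Fin 2) (Fin 2) ℝ).map Complex.ofReal).det = 0 := by
    simp [Matrix.det_fin_two, h1]
  rw [hdet]
  exact not_isUnit_zero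
end

section
/- Let K, w, h be real numbers with 0 < w < K and w < h < (K+w)²/(4K) (strong Allee effect), set D₁ = (K−w)² − 4K(h−w), N₁ = ((K−w) + √D₁)/2 and N₂ = ((K−w) − √D₁)/2. Then h/(w+N₁)² < 1/K and h/(w+N₂)² > 1/K; equivalently, for every r > 0, rN₁(h/(w+N₁)² − 1/K) < 0 and rN₂(h/(w+N₂)² − 1/K) > 0. -/
/-- Strong Allee effect with two positive axial equilibria: the first
Jacobian eigenvalue is negative at N₁ and positive at N₂. -/
theorem strong_allee_axial_eigenvalue_signs (K w h D₁ N₁ N₂ : ℝ)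
    (hw : 0 < w) (hwK : w < K) (hwh : w < h) (hh : h < (K + w) ^ 2 / (4 * K))
    (hD : D₁ = (K - w) ^ 2 - 4 * K * (h - w))
    (hN₁ : N₁ = ((K - w) + Real.sqrt D₁) / 2)
    (hN₂ : N₂ = ((K - w) - Real.sqrt D₁) / 2) :
    h / (w + N₁) ^ 2 < 1 / K ∧
    h / (w + N₂) ^ 2 > 1 / K ∧
    ∀ r : ℝ, 0 < r →
      r * N₁ * (h / (w + N₁) ^ 2 - 1 / K) < 0 ∧
      r * N₂ * (h / (w + N₂) ^ 2 - 1 / K) > 0 := by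
  have hK : 0 < K := hw.trans hwK
  have h4K : (0:ℝ) < 4 * K := by linarith
  have hh' : h * (4 * K) < (K + w) ^ 2 := (lt_div_iff₀ h4K).mp hh
  have hD0 : 0 < D₁ := by nlinarith
  set s := Real.sqrt D₁ with hs
  have hs0 : 0 ≤ s := Real.sqrt_nonneg _
  have hs2 : s ^ 2 = D₁ := Real.sq_sqrt hD0.le
  have hspos : 0 < s := Real.sqrt_pos.mpr hD0
  have hsKw : s < K - w := by nlinarith
  have hN₁pos : 0 < N₁ := by rw [hN₁]; linarith
  have hN₂pos : 0 < N₂ := by rw [hN₂]; linarith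
  have hwN₁ : 0 < w + N₁ := by linarith
  have hwN₂ : 0 < w + N₂ := by linarith
  have h1 : h / (w + N₁) ^ 2 < 1 / K := by
    rw [div_lt_div_iff₀ (by positivity) hK]
    subst hN₁; nlinarith
  have h2 : 1 / K < h / (w + N₂) ^ 2 := by
    rw [div_lt_div_iff₀ hK (by positivity)]
    subst hN₂; nlinarith
  refine ⟨h1, h2, fun r hr => ⟨?_, ?_⟩⟩
  · exact mul_neg_of_pos_of_neg (mul_pos hr hN₁pos) (sub_neg.mpr h1)
  · exact mul_pos (mul_pos hr hN₂pos) (sub_pos.mpr h2)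
end

section
/- Let r, K, a, b, c, δ, h, w be positive real numbers with b < (c/(2δ))², set D₂ = c² − 4bδ², N₄ = (c + √D₂)/(2δ), P₄ = r(b+N₄²)((K−w)N₄ − K(h−w) − N₄²)/(K·a·(w+N₄)), and suppose P₄ > 0. Then the Jacobian matrix J₄ = !![hrN₄/(w+N₄)² + 2aN₄²P₄/(b+N₄²)² − rN₄/K, −δ/c; (c − 2δN₄)P₄/(b+N₄²), 0] has negative determinant, and consequently J₄ has a complex eigenvalue with positive real part and a complex eigenvalue with negative real part; in particular the coexistence equilibrium E₄ = (N₄, P₄) is unstable. -/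
/-!
`N₄` is the larger root of `δN² - cN + bδ = 0` (the predator isocline `cN/(b+N²) = δ`), so
`c - 2δN₄ = -√D₂ < 0` and the lower-left entry of `J₄` is negative, as is the upper-right entry
`-δ/c`. With a zero lower-right entry, `det J₄` is minus the product of these two, hence negative
whatever the sign of the upper-left entry. A real `2 × 2` matrix with negative determinant has the real
eigenvalues `(tr ± √(tr² - 4 det)) / 2`, and `√(tr² - 4 det) > |tr|` separates their signs.
-/

open Polynomial

namespace Matrix

theorem ofReal_mem_spectrum_map_ofReal_of_sq_sub_trace_mul_add_det
    (M : Matrix (Fin 2) (Fin 2) ℝ) {t : ℝ} (ht : t ^ 2 - M.trace * t + M.det = 0) :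
    (t : ℂ) ∈ spectrum ℂ (M.map Complex.ofReal) := by
  apply mem_spectrum_of_isRoot_charpoly
  rw [show M.map Complex.ofReal = M.map Complex.ofRealHom from rfl, charpoly_map]
  refine IsRoot.map (f := Complex.ofRealHom) ?_
  simpa [charpoly_fin_two] using ht

theorem exists_mem_spectrum_map_ofReal_re_pos_and_neg_of_det_neg
    (M : Matrix (Fin 2) (Fin 2) ℝ) (hM : M.det < 0) :
    (∃ μ ∈ spectrum ℂ (M.map Complex.ofReal), 0 < μ.re) ∧
    (∃ ν ∈ spectrum ℂ (M.map Complex.ofReal), ν.re < 0) := by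
  set τ := M.trace
  set s := Real.sqrt (τ ^ 2 - 4 * M.det)
  have hs_sq : s ^ 2 = τ ^ 2 - 4 * M.det := Real.sq_sqrt (by nlinarith [sq_nonneg τ])
  have hτs : |τ| < s := by
    apply abs_lt_of_sq_lt_sq _ (Real.sqrt_nonneg _)
    nlinarith
  obtain ⟨hlow, hhigh⟩ := abs_lt.mp hτs
  refine ⟨⟨((τ + s) / 2 : ℝ), ?_, ?_⟩, ⟨((τ - s) / 2 : ℝ), ?_, ?_⟩⟩
  · exact ofReal_mem_spectrum_map_ofReal_of_sq_sub_trace_mul_add_det M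
      (by linear_combination hs_sq / 4)
  · rw [Complex.ofReal_re]; linarith
  · exact ofReal_mem_spectrum_map_ofReal_of_sq_sub_trace_mul_add_det M
      (by linear_combination hs_sq / 4)
  · rw [Complex.ofReal_re]; linarith

end Matrix

theorem sqrt_discriminant_pos {b c δ : ℝ} (hδ : 0 < δ) (hlt : b < (c / (2 * δ)) ^ 2) :
    0 < Real.sqrt (c ^ 2 - 4 * b * δ ^ 2) := by
  rw [div_pow, lt_div_iff₀ (by positivity)] at hlt
  exact Real.sqrt_pos.mpr (by linarith)

theorem coexistence_E4_unstable_general (r K a b c δ h w D₂ N₄ P₄ : ℝ)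
    (hb : 0 < b) (hc : 0 < c)
    (hδ : 0 < δ) (hlt : b < (c / (2 * δ)) ^ 2)
    (hD : D₂ = c ^ 2 - 4 * b * δ ^ 2)
    (hN₄ : N₄ = (c + Real.sqrt D₂) / (2 * δ))
    (hP₄pos : 0 < P₄)
    (J₄ : Matrix (Fin 2) (Fin 2) ℝ)
    (hJ : J₄ = !![h * r * N₄ / (w + N₄) ^ 2 + 2 * a * N₄ ^ 2 * P₄ / (b + N₄ ^ 2) ^ 2
        - r * N₄ / K, -(δ / c);
      (c - 2 * δ * N₄) * P₄ / (b + N₄ ^ 2), 0]) :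
    J₄.det < 0 ∧
    (∃ μ ∈ spectrum ℂ (J₄.map (Complex.ofReal)), 0 < μ.re) ∧
    (∃ ν ∈ spectrum ℂ (J₄.map (Complex.ofReal)), ν.re < 0) := by
  have hsqrt : 0 < Real.sqrt D₂ := hD ▸ sqrt_discriminant_pos hδ hlt
  have hisocline : c - 2 * δ * N₄ = -Real.sqrt D₂ := by
    rw [hN₄]; field_simp; ring
  have hlower : (c - 2 * δ * N₄) * P₄ / (b + N₄ ^ 2) < 0 := by
    rw [hisocline]
    exact div_neg_of_neg_of_pos (by nlinarith) (by positivity)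
  have hdet : J₄.det < 0 := by
    rw [hJ, Matrix.det_fin_two_of]
    nlinarith [div_pos hδ hc]
  exact ⟨hdet, J₄.exists_mem_spectrum_map_ofReal_re_pos_and_neg_of_det_neg hdet⟩

/-- The coexistence equilibrium E₄ = (N₄, P₄) is unstable: the Jacobian there
has negative determinant, hence one complex eigenvalue with positive real
part and one with negative real part. -/
theorem coexistence_E4_unstable (r K a b c δ h w D₂ N₄ P₄ : ℝ)
    (hr : 0 < r) (hK : 0 < K) (ha : 0 < a) (hb : 0 < b) (hc : 0 < c)
    (hδ : 0 < δ) (hh : 0 < h) (hw : 0 < w) (hlt : b < (c / (2 * δ)) ^ 2)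
    (hD : D₂ = c ^ 2 - 4 * b * δ ^ 2)
    (hN₄ : N₄ = (c + Real.sqrt D₂) / (2 * δ))
    (hP₄ : P₄ = r * (b + N₄ ^ 2) * ((K - w) * N₄ - K * (h - w) - N₄ ^ 2) /
      (K * a * (w + N₄)))
    (hP₄pos : 0 < P₄)
    (J₄ : Matrix (Fin 2) (Fin 2) ℝ)
    (hJ : J₄ = !![h * r * N₄ / (w + N₄) ^ 2 + 2 * a * N₄ ^ 2 * P₄ / (b + N₄ ^ 2) ^ 2
        - r * N₄ / K, -(δ / c);
      (c - 2 * δ * N₄) * P₄ / (b + N₄ ^ 2), 0]) :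
    J₄.det < 0 ∧
    (∃ μ ∈ spectrum ℂ (J₄.map (Complex.ofReal)), 0 < μ.re) ∧
    (∃ ν ∈ spectrum ℂ (J₄.map (Complex.ofReal)), ν.re < 0) :=
  coexistence_E4_unstable_general r K a b c δ h w D₂ N₄ P₄ hb hc hδ hlt hD hN₄ hP₄pos J₄ hJ
end

section
/- Let r, K, a, b, c, δ, h, w be positive real numbers with b < (c/(2δ))², set D₂ = c² − 4bδ², N₅ = (c − √D₂)/(2δ), P₅ = r(b+N₅²)((K−w)N₅ − K(h−w) − N₅²)/(K·a·(w+N₅)), suppose P₅ > 0, and suppose the trace T = hrN₅/(w+N₅)² + 2aN₅²P₅/(b+N₅²)² − rN₅/K is negative. Then the Jacobian matrix J₅ = !![T, −δ/c; (c − 2δN₅)P₅/(b+N₅²), 0] has positive determinant and negative trace, and every complex eigenvalue of J₅ has negative real part; in particular the coexistence equilibrium E₅ = (N₅, P₅) is locally asymptotically stable. -/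
/-!
The determinant of J₅ is `(δ / c) · (c - 2δN₅) P₅ / (b + N₅²)`, and `c - 2δN₅ = √D₂ > 0` because
`N₅` is the smaller root of `δN² - cN + bδ = 0`; so the determinant is positive, and with negative
trace the Routh–Hurwitz criterion applies to the characteristic polynomial `μ² - Tμ + det J₅`.
-/

open Polynomial

theorem Complex.re_neg_of_sq_sub_mul_add_eq_zero {t d : ℝ} (ht : t < 0) (hd : 0 < d) {μ : ℂ}
    (hμ : μ ^ 2 - t * μ + d = 0) : μ.re < 0 := by
  have hre : μ.re ^ 2 - μ.im ^ 2 - t * μ.re + d = 0 := by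
    simpa [pow_two] using congrArg Complex.re hμ
  have him : μ.im * (2 * μ.re - t) = 0 := by
    linear_combination (by simpa [pow_two] using congrArg Complex.im hμ : _ = (0 : ℝ))
  rcases mul_eq_zero.mp him with hreal | hpair
  · by_contra! hx
    rw [hreal] at hre
    nlinarith
  · linarith

theorem Matrix.re_lt_zero_of_mem_spectrum_of_det_pos_of_trace_neg
    {A : Matrix (Fin 2) (Fin 2) ℝ} (hdet : 0 < A.det) (htr : A.trace < 0) {μ : ℂ}
    (hμ : μ ∈ spectrum ℂ (A.map Complex.ofReal)) : μ.re < 0 := by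
  rw [Matrix.mem_spectrum_iff_isRoot_charpoly, Matrix.charpoly_fin_two, IsRoot.def] at hμ
  refine Complex.re_neg_of_sq_sub_mul_add_eq_zero htr hdet ?_
  have hdet_map : (A.map Complex.ofReal).det = A.det := (Complex.ofRealHom.map_det A).symm
  simpa [hdet_map, Matrix.trace] using hμ

theorem sub_sq_mul_pos_of_lt_div_sq {b c δ : ℝ} (hδ : 0 < δ) (hlt : b < (c / (2 * δ)) ^ 2) :
    0 < c ^ 2 - 4 * b * δ ^ 2 := by
  rw [div_pow, lt_div_iff₀ (by positivity)] at hlt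
  linarith

theorem coexistence_E5_stable_general (b c δ D₂ N₅ P₅ T : ℝ)
    (hb : 0 < b) (hc : 0 < c) (hδ : 0 < δ) (hlt : b < (c / (2 * δ)) ^ 2)
    (hD : D₂ = c ^ 2 - 4 * b * δ ^ 2)
    (hN₅ : N₅ = (c - Real.sqrt D₂) / (2 * δ))
    (hP₅pos : 0 < P₅)
    (hTneg : T < 0)
    (J₅ : Matrix (Fin 2) (Fin 2) ℝ)
    (hJ : J₅ = !![T, -(δ / c); (c - 2 * δ * N₅) * P₅ / (b + N₅ ^ 2), 0]) :
    0 < J₅.det ∧ J₅.trace < 0 ∧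
    ∀ μ ∈ spectrum ℂ (J₅.map (Complex.ofReal)), μ.re < 0 := by
  have hsqrt : 0 < Real.sqrt D₂ := Real.sqrt_pos.mpr (hD ▸ sub_sq_mul_pos_of_lt_div_sq hδ hlt)
  have hgap : c - 2 * δ * N₅ = Real.sqrt D₂ := by
    rw [hN₅]
    field_simp
    ring
  have hdet : 0 < J₅.det := by
    rw [hJ, Matrix.det_fin_two_of, hgap]
    have : 0 < δ / c * (Real.sqrt D₂ * P₅ / (b + N₅ ^ 2)) := by positivity
    linarith
  have htr : J₅.trace < 0 := by
    rwa [hJ, Matrix.trace_fin_two_of, add_zero]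
  exact ⟨hdet, htr, fun μ hμ =>
    Matrix.re_lt_zero_of_mem_spectrum_of_det_pos_of_trace_neg hdet htr hμ⟩

/-- If the trace of the Jacobian at the coexistence equilibrium E₅ = (N₅, P₅)
is negative, then the Jacobian has positive determinant and negative trace,
and every complex eigenvalue has negative real part: E₅ is locally
asymptotically stable. -/
theorem coexistence_E5_stable (r K a b c δ h w D₂ N₅ P₅ T : ℝ)
    (hr : 0 < r) (hK : 0 < K) (ha : 0 < a) (hb : 0 < b) (hc : 0 < c)
    (hδ : 0 < δ) (hh : 0 < h) (hw : 0 < w) (hlt : b < (c / (2 * δ)) ^ 2)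
    (hD : D₂ = c ^ 2 - 4 * b * δ ^ 2)
    (hN₅ : N₅ = (c - Real.sqrt D₂) / (2 * δ))
    (hP₅ : P₅ = r * (b + N₅ ^ 2) * ((K - w) * N₅ - K * (h - w) - N₅ ^ 2) /
      (K * a * (w + N₅)))
    (hP₅pos : 0 < P₅)
    (hT : T = h * r * N₅ / (w + N₅) ^ 2 + 2 * a * N₅ ^ 2 * P₅ / (b + N₅ ^ 2) ^ 2
      - r * N₅ / K)
    (hTneg : T < 0)
    (J₅ : Matrix (Fin 2) (Fin 2) ℝ)
    (hJ : J₅ = !![T, -(δ / c); (c - 2 * δ * N₅) * P₅ / (b + N₅ ^ 2), 0]) :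
    0 < J₅.det ∧ J₅.trace < 0 ∧
    ∀ μ ∈ spectrum ℂ (J₅.map (Complex.ofReal)), μ.re < 0 :=
  coexistence_E5_stable_general b c δ D₂ N₅ P₅ T hb hc hδ hlt hD hN₅ hP₅pos hTneg J₅ hJ
end
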